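/- Let φ : K → L be a geometric and dense morphism of ⊗-triangulated categories. Then the induced map Φ : Spc(L) → Spc(K), Φ(C) = ⋂ {H ⊗-thick in K : C ⊆ ⟨φ(H)⟩}, is continuous with respect to the topologies on Spc(L) and Spc(K) generated by the basic open sets U(-). -/

import Mathlib

namespace Balmer

open CategoryTheory CategoryTheory.Limits CategoryTheory.Pretriangulated ZeroObject

universe v u v' u'

variable {K : Type u} [Category.{v} K] [Preadditive K] [HasZeroObject K] [HasShift K ℤ]
  [∀ n : ℤ, (shiftFunctor K n).Additive] [Pretriangulated K] [HasBinaryBiproducts K]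

/-- A `⊗`-thick subcategory of `K` (identified with its set of objects):
a full triangulated subcategory, closed under isomorphisms, translations, cones and
direct summands, which is moreover an ideal for the tensor product on both sides. -/
def IsTensorThick (tensor : K ⥤ K ⥤ K) (S : Set K) : Prop :=
  (0 : K) ∈ S ∧
  (∀ ⦃a b : K⦄, (a ≅ b) → a ∈ S → b ∈ S) ∧
  (∀ a ∈ S, ∀ n : ℤ, (shiftFunctor K n).obj a ∈ S) ∧
  (∀ T ∈ (distTriang K), T.obj₁ ∈ S → T.obj₂ ∈ S → T.obj₃ ∈ S) ∧
  (∀ a b : K, (a ⊞ b) ∈ S → a ∈ S ∧ b ∈ S) ∧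
  (∀ a ∈ S, ∀ b : K, (tensor.obj a).obj b ∈ S ∧ (tensor.obj b).obj a ∈ S)

/-- `⟨D⟩`, the smallest `⊗`-thick subcategory of `K` containing `D`. -/
def tensorSpan (tensor : K ⥤ K ⥤ K) (D : Set K) : Set K :=
  ⋂₀ {S : Set K | IsTensorThick tensor S ∧ D ⊆ S}

/-- A `⊗`-thick subcategory `A` is atomic if whenever `A ⊆ ⟨D⟩` for a collection of
objects `D`, there is some `d ∈ D` with `A ⊆ ⟨d⟩`. -/
def IsAtomic (tensor : K ⥤ K ⥤ K) (A : Set K) : Prop :=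
  IsTensorThick tensor A ∧
    ∀ D : Set K, A ⊆ tensorSpan tensor D → ∃ d ∈ D, A ⊆ tensorSpan tensor {d}

/-- The spectrum `Spc(K,⊗)`: the collection of all nonzero atomic `⊗`-thick
subcategories of `K`. -/
def Spc (tensor : K ⥤ K ⥤ K) : Set (Set K) :=
  {A | IsAtomic tensor A ∧ ∃ a ∈ A, ¬ IsZero a}

/-- The basic subset `U(a) = {B ∈ Spc(K) | B ⊄ ⟨a⟩}`. -/
def SpcU (tensor : K ⥤ K ⥤ K) (a : K) : Set (Set K) :=
  {B ∈ Spc tensor | ¬ B ⊆ tensorSpan tensor {a}}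

/-- The spectrum as a type. -/
abbrev SpcTop (tensor : K ⥤ K ⥤ K) : Type u := {A : Set K // A ∈ Spc tensor}

/-- The topology on `Spc(K,⊗)` having the subsets `U(a)`, `a ∈ K`, as a basis of
open subsets. -/
instance spcTopology (tensor : K ⥤ K ⥤ K) : TopologicalSpace (SpcTop tensor) :=
  TopologicalSpace.generateFrom
    {V : Set (SpcTop tensor) | ∃ a : K, V = {B | ¬ B.1 ⊆ tensorSpan tensor {a}}}

variable {L : Type u'} [Category.{v'} L] [Preadditive L] [HasZeroObject L] [HasShift L ℤ]
  [∀ n : ℤ, (shiftFunctor L n).Additive] [Pretriangulated L] [HasBinaryBiproducts L]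

/-- A morphism `φ` of `⊗`-triangulated categories is geometric if `⟨φ(-)⟩`
commutes with arbitrary intersections of `⊗`-thick subcategories. -/
def IsGeometric (tensorK : K ⥤ K ⥤ K) (tensorL : L ⥤ L ⥤ L) (φ : K ⥤ L) : Prop :=
  ∀ 𝒞 : Set (Set K), (∀ C ∈ 𝒞, IsTensorThick tensorK C) →
    tensorSpan tensorL (φ.obj '' ⋂₀ 𝒞) = ⋂ C ∈ 𝒞, tensorSpan tensorL (φ.obj '' C)

/-- A morphism `φ` of `⊗`-triangulated categories is dense if `⟨φ(K)⟩ = L`. -/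
def IsDense (tensorL : L ⥤ L ⥤ L) (φ : K ⥤ L) : Prop :=
  tensorSpan tensorL (Set.range φ.obj) = Set.univ

/-- The map `Φ = Spc(φ)` underlying a geometric and dense morphism `φ`:
`Φ(C)` is the intersection of all `⊗`-thick subcategories `H ⊆ K` such that
`C ⊆ ⟨φ(H)⟩`. -/
def PhiMap (tensorK : K ⥤ K ⥤ K) (tensorL : L ⥤ L ⥤ L) (φ : K ⥤ L) (C : Set L) : Set K :=
  ⋂₀ {H : Set K | IsTensorThick tensorK H ∧ C ⊆ tensorSpan tensorL (φ.obj '' H)}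

/-! Geometricity makes `Φ` the lower adjoint of `H ↦ ⟨φ(H)⟩`: `Φ(C) ⊆ H` iff `C ⊆ ⟨φ(H)⟩`
for every `⊗`-thick `H`. Since `⟨φ⟨a⟩⟩ = ⟨φ a⟩`, this gives `Φ(C) ⊆ ⟨a⟩` iff `C ⊆ ⟨φ a⟩`,
i.e. `Φ⁻¹(U(a)) = U(φ a)`, so preimages of basic opens are basic opens. -/

section TensorSpan

variable (tensor : K ⥤ K ⥤ K)

lemma isTensorThick_sInter {𝒞 : Set (Set K)} (h : ∀ S ∈ 𝒞, IsTensorThick tensor S) :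
    IsTensorThick tensor (⋂₀ 𝒞) :=
  ⟨fun S hS => (h S hS).1,
    fun _ _ i ha S hS => (h S hS).2.1 i (ha S hS),
    fun a ha n S hS => (h S hS).2.2.1 a (ha S hS) n,
    fun T hT h₁ h₂ S hS => (h S hS).2.2.2.1 T hT (h₁ S hS) (h₂ S hS),
    fun a b hab => ⟨fun S hS => ((h S hS).2.2.2.2.1 a b (hab S hS)).1,
      fun S hS => ((h S hS).2.2.2.2.1 a b (hab S hS)).2⟩,
    fun a ha b => ⟨fun S hS => ((h S hS).2.2.2.2.2 a (ha S hS) b).1,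
      fun S hS => ((h S hS).2.2.2.2.2 a (ha S hS) b).2⟩⟩

lemma isTensorThick_tensorSpan (D : Set K) : IsTensorThick tensor (tensorSpan tensor D) :=
  isTensorThick_sInter tensor fun _ hS => hS.1

lemma subset_tensorSpan (D : Set K) : D ⊆ tensorSpan tensor D :=
  fun _ hd _ hS => hS.2 hd

lemma tensorSpan_subset {D S : Set K} (hS : IsTensorThick tensor S) (hD : D ⊆ S) :
    tensorSpan tensor D ⊆ S :=
  fun _ hx => hx S ⟨hS, hD⟩

lemma tensorSpan_mono {D E : Set K} (h : D ⊆ E) : tensorSpan tensor D ⊆ tensorSpan tensor E :=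
  tensorSpan_subset tensor (isTensorThick_tensorSpan tensor E)
    (h.trans (subset_tensorSpan tensor E))

end TensorSpan

section Morphism

variable (tensorK : K ⥤ K ⥤ K) (tensorL : L ⥤ L ⥤ L) (φ : K ⥤ L)

lemma isTensorThick_preimage [φ.CommShift ℤ] [φ.IsTriangulated]
    (e : ∀ a b : K, φ.obj ((tensorK.obj a).obj b) ≅ (tensorL.obj (φ.obj a)).obj (φ.obj b))
    {S : Set L} (hS : IsTensorThick tensorL S) :
    IsTensorThick tensorK (φ.obj ⁻¹' S) := by
  have : PreservesBinaryBiproducts φ := preservesBinaryBiproducts_of_preservesBiproducts φ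
  obtain ⟨h0, hiso, hshift, htriang, hsummand, htensor⟩ := hS
  exact ⟨hiso φ.mapZeroObject.symm h0,
    fun _ _ i ha => hiso (φ.mapIso i) ha,
    fun a ha n => hiso ((φ.commShiftIso n).app a).symm (hshift _ ha n),
    fun T hT h₁ h₂ => htriang _ (φ.map_distinguished T hT) h₁ h₂,
    fun a b hab => hsummand _ _ (hiso (φ.mapBiprod a b) hab),
    fun a ha b => ⟨hiso (e a b).symm (htensor _ ha (φ.obj b)).1,
      hiso (e b a).symm (htensor _ ha (φ.obj b)).2⟩⟩

lemma tensorSpan_image_tensorSpan [φ.CommShift ℤ] [φ.IsTriangulated]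
    (e : ∀ a b : K, φ.obj ((tensorK.obj a).obj b) ≅ (tensorL.obj (φ.obj a)).obj (φ.obj b))
    (D : Set K) :
    tensorSpan tensorL (φ.obj '' tensorSpan tensorK D) = tensorSpan tensorL (φ.obj '' D) := by
  refine subset_antisymm ?_ (tensorSpan_mono tensorL (Set.image_mono (subset_tensorSpan _ D)))
  have hspan : tensorSpan tensorK D ⊆ φ.obj ⁻¹' tensorSpan tensorL (φ.obj '' D) :=
    tensorSpan_subset tensorK
      (isTensorThick_preimage tensorK tensorL φ e (isTensorThick_tensorSpan tensorL _))
      (fun d hd => subset_tensorSpan tensorL _ (Set.mem_image_of_mem φ.obj hd))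
  exact tensorSpan_subset tensorL (isTensorThick_tensorSpan tensorL _)
    (Set.image_subset_iff.mpr hspan)

lemma subset_tensorSpan_image_phiMap (hgeo : IsGeometric tensorK tensorL φ) (C : Set L) :
    C ⊆ tensorSpan tensorL (φ.obj '' PhiMap tensorK tensorL φ C) := by
  rw [PhiMap, hgeo _ fun _ hH => hH.1]
  exact Set.subset_iInter₂ fun _ hH => hH.2

lemma phiMap_subset_iff (hgeo : IsGeometric tensorK tensorL φ) {C : Set L} {H : Set K}
    (hH : IsTensorThick tensorK H) :
    PhiMap tensorK tensorL φ C ⊆ H ↔ C ⊆ tensorSpan tensorL (φ.obj '' H) :=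
  ⟨fun h => (subset_tensorSpan_image_phiMap tensorK tensorL φ hgeo C).trans
      (tensorSpan_mono tensorL (Set.image_mono h)),
    fun h => Set.sInter_subset_of_mem ⟨hH, h⟩⟩

lemma phiMap_subset_tensorSpan_singleton_iff [φ.CommShift ℤ] [φ.IsTriangulated]
    (e : ∀ a b : K, φ.obj ((tensorK.obj a).obj b) ≅ (tensorL.obj (φ.obj a)).obj (φ.obj b))
    (hgeo : IsGeometric tensorK tensorL φ) (C : Set L) (a : K) :
    PhiMap tensorK tensorL φ C ⊆ tensorSpan tensorK {a} ↔
      C ⊆ tensorSpan tensorL {φ.obj a} := by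
  rw [phiMap_subset_iff tensorK tensorL φ hgeo (isTensorThick_tensorSpan tensorK _),
    tensorSpan_image_tensorSpan tensorK tensorL φ e, Set.image_singleton]

end Morphism

/-- Proposition 4.8: the map `Φ : Spc(L) → Spc(K)` induced by a
geometric and dense morphism `φ : K ⥤ L` is continuous. -/
theorem stmt10 (tensorK : K ⥤ K ⥤ K) (tensorL : L ⥤ L ⥤ L)
    [∀ a : K, (tensorK.obj a).CommShift ℤ] [∀ a : K, (tensorK.obj a).IsTriangulated]
    [∀ b : K, (tensorK.flip.obj b).CommShift ℤ] [∀ b : K, (tensorK.flip.obj b).IsTriangulated]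
    [∀ a : L, (tensorL.obj a).CommShift ℤ] [∀ a : L, (tensorL.obj a).IsTriangulated]
    [∀ b : L, (tensorL.flip.obj b).CommShift ℤ] [∀ b : L, (tensorL.flip.obj b).IsTriangulated]
    (φ : K ⥤ L) [φ.CommShift ℤ] [φ.IsTriangulated]
    (e : ∀ a b : K, φ.obj ((tensorK.obj a).obj b) ≅ (tensorL.obj (φ.obj a)).obj (φ.obj b))
    (hgeo : IsGeometric tensorK tensorL φ) (hdense : IsDense tensorL φ)
    (Φ : SpcTop tensorL → SpcTop tensorK)
    (hΦ : ∀ C : SpcTop tensorL, (Φ C).1 = PhiMap tensorK tensorL φ C.1) :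
    Continuous Φ := by
  rw [continuous_generateFrom_iff]
  rintro _ ⟨a, rfl⟩
  have hpreimage : Φ ⁻¹' {B | ¬ B.1 ⊆ tensorSpan tensorK {a}} =
      {C | ¬ C.1 ⊆ tensorSpan tensorL {φ.obj a}} := by
    ext C
    simp only [Set.mem_preimage, Set.mem_ofPred_eq, hΦ,
      phiMap_subset_tensorSpan_singleton_iff tensorK tensorL φ e hgeo]
  rw [hpreimage]
  exact TopologicalSpace.isOpen_generateFrom_of_mem ⟨φ.obj a, rfl⟩

end Balmer
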